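/- Let N, d ≥ 1, B > 0, let W ∈ ℝ^{N×N} be doubly stochastic with ‖W − (1/N)𝟙𝟙ᵀ‖_* ≤ 1, let (ε_t)_{t∈ℕ} be a nonincreasing sequence of nonnegative step sizes, and let (Θ^t)_{t∈ℕ} in ℝ^{N×d} satisfy Θ^{t+1} = WΘ^t + ε_t G^t for every t, where each G^t ∈ ℝ^{N×d} has rows g_i^t with ‖g_i^t‖ ≤ B(‖θ_i^t‖ + 1) (θ_i^t being the rows of Θ^t). Write θ̄^t for the row average and S^t for the consensus error of Θ^t. Let τ ≥ 1 and k ≥ τ be natural numbers such that 6NBτ ε_{k−τ} ≤ 1. Then ‖θ̄^k − θ̄^{k−τ}‖ ≤ 3 ε_{k−τ} B τ (‖θ̄^k‖ + √(S^{k−τ}) + 1), and consequently ‖θ̄^k − θ̄^{k−τ}‖ ≤ (1/(2N)) (‖θ̄^k‖ + √(S^{k−τ}) + 1). -/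

import Mathlib

/-!
Let `P_t = ∑ᵢ ‖θᵢᵗ‖`. Since `W` is nonnegative with unit column sums, mixing preserves the sum
of the rows and does not increase `P`, so `θ̄^{t+1} = θ̄^t + ε_t ḡ^t` and
`P_{t+1} + N ≤ (1 + ε_t B) (P_t + N)`. Over the window the growth factor is
`(1 + ε B)^τ ≤ exp (ε B τ) ≤ 6/5`. With `c = ε_{k-τ} B τ`, `D = ‖θ̄^k - θ̄^{k-τ}‖` and the row bound
`‖θᵢ‖ ≤ ‖θ̄‖ + √S`, this gives `D ≤ (6/5) c (‖θ̄^k‖ + √S^{k-τ} + 1 + D)`, and `c ≤ 1/6` lets the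
`D` on the right be absorbed into the left.
-/

/-- Euclidean norm of a vector in `ℝ^d` given as a plain function. -/
noncomputable def enorm {d : ℕ} (v : Fin d → ℝ) : ℝ :=
  ‖(WithLp.equiv 2 (Fin d → ℝ)).symm v‖

/-- Spectral (ℓ₂ operator) norm of a square matrix. -/
noncomputable def specNorm {N : ℕ} (M : Matrix (Fin N) (Fin N) ℝ) : ℝ :=
  ‖Matrix.toEuclideanCLM (𝕜 := ℝ) M‖

/-- A matrix is doubly stochastic: nonnegative entries, all row sums and column sums equal 1. -/
def DoublyStochastic {N : ℕ} (W : Matrix (Fin N) (Fin N) ℝ) : Prop :=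
  (∀ i j, 0 ≤ W i j) ∧ (∀ i, ∑ j, W i j = 1) ∧ (∀ j, ∑ i, W i j = 1)

/-- Row average of a matrix `Θ ∈ ℝ^{N×d}`: `θ̄ = (1/N) Θᵀ 𝟙`. -/
noncomputable def rowAvg {N d : ℕ} (Θ : Matrix (Fin N) (Fin d) ℝ) : Fin d → ℝ :=
  fun j => (N : ℝ)⁻¹ * ∑ i, Θ i j

/-- Consensus error `S = ∑ᵢ ‖θᵢ − θ̄‖²` of a matrix of stacked iterates. -/
noncomputable def consErr {N d : ℕ} (Θ : Matrix (Fin N) (Fin d) ℝ) : ℝ :=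
  ∑ i, (_root_.enorm (fun j => Θ i j - rowAvg Θ j)) ^ 2

open Finset

theorem one_add_pow_le_one_div_one_sub {a : ℝ} (ha : 0 ≤ a) {n : ℕ} (hn : n * a < 1) :
    (1 + a) ^ n ≤ 1 / (1 - n * a) :=
  calc (1 + a) ^ n ≤ Real.exp a ^ n := by
        gcongr
        linarith [Real.add_one_le_exp a]
    _ = Real.exp (n * a) := (Real.exp_nat_mul a n).symm
    _ ≤ 1 / (1 - n * a) := Real.exp_bound_div_one_sub_of_interval (by positivity) hn

theorem le_three_mul_of_le_six_fifths_mul {c D X : ℝ} (hc : 0 ≤ c) (hc' : c ≤ 1 / 6)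
    (hD : 0 ≤ D) (hX : 0 ≤ X) (h : D ≤ 6 / 5 * c * (X + D)) : D ≤ 3 * c * X := by
  nlinarith [mul_nonneg hc hX, mul_nonneg (sub_nonneg.2 hc') hD]

namespace Consensus

variable {ι E : Type*} [Fintype ι]

section Module

variable [AddCommMonoid E] [Module ℝ E]

noncomputable def avg (x : ι → E) : E := (Fintype.card ι : ℝ)⁻¹ • ∑ i, x i

theorem avg_add_smul (x y : ι → E) (c : ℝ) :
    avg (fun i => x i + c • y i) = avg x + c • avg y := by
  simp only [avg, sum_add_distrib, ← smul_sum, smul_add, smul_comm c]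

theorem sum_sum_smul_eq {W : Matrix ι ι ℝ} (hW : ∀ l, ∑ i, W i l = 1) (x : ι → E) :
    ∑ i, ∑ l, W i l • x l = ∑ l, x l := by
  rw [sum_comm]
  simp only [← sum_smul, hW, one_smul]

theorem avg_sum_smul {W : Matrix ι ι ℝ} (hW : ∀ l, ∑ i, W i l = 1) (x : ι → E) :
    avg (fun i => ∑ l, W i l • x l) = avg x := by
  rw [avg, sum_sum_smul_eq hW, avg]

end Module

variable [SeminormedAddCommGroup E]

theorem sum_norm_le_card_mul (x : ι → E) (c : E) :
    ∑ i, ‖x i‖ ≤ Fintype.card ι * (‖c‖ + √(∑ i, ‖x i - c‖ ^ 2)) := by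
  have hdev : ∀ i, ‖x i - c‖ ≤ √(∑ i, ‖x i - c‖ ^ 2) := fun i =>
    Real.le_sqrt_of_sq_le <| single_le_sum (f := fun i => ‖x i - c‖ ^ 2)
      (fun _ _ => sq_nonneg _) (mem_univ i)
  calc ∑ i, ‖x i‖ ≤ ∑ _i : ι, (‖c‖ + √(∑ i, ‖x i - c‖ ^ 2)) := by
        refine sum_le_sum fun i _ => ?_
        linarith [norm_le_norm_add_norm_sub' (x i) c, hdev i]
    _ = _ := by rw [sum_const, card_univ, nsmul_eq_mul]

theorem sum_norm_le_of_norm_le {x g : ι → E} {B : ℝ} (hg : ∀ i, ‖g i‖ ≤ B * (‖x i‖ + 1)) :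
    ∑ i, ‖g i‖ ≤ B * (∑ i, ‖x i‖ + Fintype.card ι) :=
  calc ∑ i, ‖g i‖ ≤ ∑ i, B * (‖x i‖ + 1) := sum_le_sum fun i _ => hg i
    _ = _ := by rw [← mul_sum, sum_add_distrib, sum_const, card_univ, nsmul_one]

variable [NormedSpace ℝ E]

theorem norm_avg_le (x : ι → E) : ‖avg x‖ ≤ (Fintype.card ι : ℝ)⁻¹ * ∑ i, ‖x i‖ := by
  rw [avg, norm_smul, norm_inv, Real.norm_natCast]
  gcongr
  exact norm_sum_le _ _

theorem sum_norm_sum_smul_le {W : Matrix ι ι ℝ} (hW₀ : ∀ i l, 0 ≤ W i l)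
    (hW : ∀ l, ∑ i, W i l = 1) (x : ι → E) :
    ∑ i, ‖∑ l, W i l • x l‖ ≤ ∑ l, ‖x l‖ :=
  calc ∑ i, ‖∑ l, W i l • x l‖ ≤ ∑ i, ∑ l, W i l • ‖x l‖ := by
        refine sum_le_sum fun i _ => (norm_sum_le _ _).trans_eq ?_
        simp only [norm_smul, Real.norm_of_nonneg (hW₀ i _), smul_eq_mul]
    _ = ∑ l, ‖x l‖ := sum_sum_smul_eq hW _

section Iteration

variable {W : Matrix ι ι ℝ} {ε : ℕ → ℝ} {B : ℝ} {x g : ℕ → ι → E}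

theorem avg_succ (hW : ∀ l, ∑ i, W i l = 1)
    (hx : ∀ t i, x (t + 1) i = ∑ l, W i l • x t l + ε t • g t i) (t : ℕ) :
    avg (x (t + 1)) = avg (x t) + ε t • avg (g t) := by
  simp only [funext (hx t), avg_add_smul, avg_sum_smul hW]

theorem avg_add_sub_avg (hW : ∀ l, ∑ i, W i l = 1)
    (hx : ∀ t i, x (t + 1) i = ∑ l, W i l • x t l + ε t • g t i) (r m : ℕ) :
    avg (x (r + m)) - avg (x r) = ∑ s ∈ range m, ε (r + s) • avg (g (r + s)) := by
  induction m with
  | zero => simp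
  | succ m ih => rw [sum_range_succ, ← ih, ← add_assoc, avg_succ hW hx]; abel

theorem sum_norm_succ_add_card_le (hW₀ : ∀ i l, 0 ≤ W i l) (hW : ∀ l, ∑ i, W i l = 1)
    (hx : ∀ t i, x (t + 1) i = ∑ l, W i l • x t l + ε t • g t i) {t : ℕ} (hε : 0 ≤ ε t)
    (hg : ∀ i, ‖g t i‖ ≤ B * (‖x t i‖ + 1)) :
    ∑ i, ‖x (t + 1) i‖ + Fintype.card ι ≤ (1 + ε t * B) * (∑ i, ‖x t i‖ + Fintype.card ι) := by
  have hstep : ∑ i, ‖x (t + 1) i‖ ≤ ∑ i, ‖∑ l, W i l • x t l‖ + ε t * ∑ i, ‖g t i‖ := by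
    simp only [hx t, mul_sum, ← sum_add_distrib]
    refine sum_le_sum fun i _ => (norm_add_le _ _).trans_eq ?_
    rw [norm_smul, Real.norm_of_nonneg hε]
  have := sum_norm_sum_smul_le hW₀ hW (x t)
  have := mul_le_mul_of_nonneg_left (sum_norm_le_of_norm_le hg) hε
  linarith

theorem sum_norm_add_card_le_pow (hW₀ : ∀ i l, 0 ≤ W i l) (hW : ∀ l, ∑ i, W i l = 1)
    (hx : ∀ t i, x (t + 1) i = ∑ l, W i l • x t l + ε t • g t i) (hε : ∀ t, 0 ≤ ε t)
    (hε_anti : Antitone ε) (hB : 0 ≤ B) (hg : ∀ t i, ‖g t i‖ ≤ B * (‖x t i‖ + 1)) (r s : ℕ) :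
    ∑ i, ‖x (r + s) i‖ + Fintype.card ι ≤ (1 + ε r * B) ^ s * (∑ i, ‖x r i‖ + Fintype.card ι) := by
  induction s with
  | zero => simp
  | succ s ih =>
    have hrate : 1 + ε (r + s) * B ≤ 1 + ε r * B := by
      gcongr
      exact hε_anti (Nat.le_add_right r s)
    calc ∑ i, ‖x (r + s + 1) i‖ + Fintype.card ι
        ≤ (1 + ε (r + s) * B) * (∑ i, ‖x (r + s) i‖ + Fintype.card ι) :=
          sum_norm_succ_add_card_le hW₀ hW hx (hε _) (hg _)
      _ ≤ (1 + ε r * B) * ((1 + ε r * B) ^ s * (∑ i, ‖x r i‖ + Fintype.card ι)) := by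
          gcongr
          have := hε r; positivity
      _ = _ := by ring

theorem norm_avg_add_sub_avg_le (hW₀ : ∀ i l, 0 ≤ W i l) (hW : ∀ l, ∑ i, W i l = 1)
    (hx : ∀ t i, x (t + 1) i = ∑ l, W i l • x t l + ε t • g t i) (hε : ∀ t, 0 ≤ ε t)
    (hε_anti : Antitone ε) (hB : 0 ≤ B) (hg : ∀ t i, ‖g t i‖ ≤ B * (‖x t i‖ + 1)) (r m : ℕ) :
    ‖avg (x (r + m)) - avg (x r)‖ ≤ ε r * B * m * (1 + ε r * B) ^ m *
      ((Fintype.card ι : ℝ)⁻¹ * (∑ i, ‖x r i‖ + Fintype.card ι)) := by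
  rw [avg_add_sub_avg hW hx]
  refine (norm_sum_le _ _).trans ?_
  have hterm : ∀ s ∈ range m, ‖ε (r + s) • avg (g (r + s))‖ ≤ ε r * B * (1 + ε r * B) ^ m *
      ((Fintype.card ι : ℝ)⁻¹ * (∑ i, ‖x r i‖ + Fintype.card ι)) := by
    intro s hs
    have hεs : ε (r + s) ≤ ε r := hε_anti (Nat.le_add_right r s)
    have hpow : (1 + ε r * B) ^ s ≤ (1 + ε r * B) ^ m :=
      pow_le_pow_right₀ (by have := hε r; nlinarith) (mem_range.1 hs).le
    calc ‖ε (r + s) • avg (g (r + s))‖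
        ≤ ε (r + s) * ((Fintype.card ι : ℝ)⁻¹ * (B * (∑ i, ‖x (r + s) i‖ + Fintype.card ι))) := by
          rw [norm_smul, Real.norm_of_nonneg (hε _)]
          refine mul_le_mul_of_nonneg_left ((norm_avg_le _).trans ?_) (hε _)
          exact mul_le_mul_of_nonneg_left (sum_norm_le_of_norm_le (hg _)) (by positivity)
      _ ≤ ε r * ((Fintype.card ι : ℝ)⁻¹ * (B * ((1 + ε r * B) ^ m *
            (∑ i, ‖x r i‖ + Fintype.card ι)))) := by
          have hgrowth := sum_norm_add_card_le_pow hW₀ hW hx hε hε_anti hB hg r s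
          have := hε r
          gcongr ?_ * (_ * (_ * ?_))
          exact hgrowth.trans (by gcongr)
      _ = _ := by ring
  refine (sum_le_sum hterm).trans_eq ?_
  rw [sum_const, card_range, nsmul_eq_mul]
  ring

theorem norm_avg_add_sub_avg_le_three_mul (hW₀ : ∀ i l, 0 ≤ W i l) (hW : ∀ l, ∑ i, W i l = 1)
    (hx : ∀ t i, x (t + 1) i = ∑ l, W i l • x t l + ε t • g t i) (hε : ∀ t, 0 ≤ ε t)
    (hε_anti : Antitone ε) (hB : 0 ≤ B) (hg : ∀ t i, ‖g t i‖ ≤ B * (‖x t i‖ + 1)) {r τ : ℕ}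
    (hsmall : ε r * B * τ ≤ 1 / 6) :
    ‖avg (x (r + τ)) - avg (x r)‖ ≤ 3 * ε r * B * τ *
      (‖avg (x (r + τ))‖ + √(∑ i, ‖x r i - avg (x r)‖ ^ 2) + 1) := by
  have hbar := norm_le_norm_add_norm_sub (avg (x (r + τ))) (avg (x r))
  have hP := sum_norm_le_card_mul (x r) (avg (x r))
  set D := ‖avg (x (r + τ)) - avg (x r)‖
  set S := √(∑ i, ‖x r i - avg (x r)‖ ^ 2)
  set N : ℝ := (Fintype.card ι : ℝ)
  have ha : 0 ≤ ε r * B := mul_nonneg (hε r) hB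
  have hpow : (1 + ε r * B) ^ τ ≤ 6 / 5 := by
    refine (one_add_pow_le_one_div_one_sub ha (by linarith)).trans ?_
    rw [div_le_iff₀ (by linarith)]
    linarith
  have hinit : N⁻¹ * (∑ i, ‖x r i‖ + N) ≤ ‖avg (x (r + τ))‖ + S + 1 + D :=
    calc N⁻¹ * (∑ i, ‖x r i‖ + N) ≤ N⁻¹ * N * (‖avg (x r)‖ + S + 1) := by
          rw [mul_assoc]
          gcongr
          linarith
      _ ≤ ‖avg (x r)‖ + S + 1 :=
          mul_le_of_le_one_left (by positivity) (inv_mul_le_one_of_le₀ (le_refl N) (by positivity))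
      _ ≤ ‖avg (x (r + τ))‖ + S + 1 + D := by linarith
  have hD : D ≤ 6 / 5 * (ε r * B * τ) * (‖avg (x (r + τ))‖ + S + 1 + D) :=
    calc D ≤ ε r * B * τ * (1 + ε r * B) ^ τ * (N⁻¹ * (∑ i, ‖x r i‖ + N)) :=
          norm_avg_add_sub_avg_le hW₀ hW hx hε hε_anti hB hg r τ
      _ ≤ 6 / 5 * (ε r * B * τ) * (‖avg (x (r + τ))‖ + S + 1 + D) := by
          rw [mul_comm (6 / 5 : ℝ)]
          gcongr
  have := le_three_mul_of_le_six_fifths_mul (by positivity) hsmall (norm_nonneg _) (by positivity) hD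
  linarith

end Iteration

end Consensus

section EuclideanRows

open Consensus

variable {N d : ℕ}

def euclideanRows (Θ : Matrix (Fin N) (Fin d) ℝ) : Fin N → EuclideanSpace ℝ (Fin d) :=
  fun i => WithLp.toLp 2 (fun j => Θ i j)

theorem euclideanRows_mul_add_smul (W : Matrix (Fin N) (Fin N) ℝ) (Θ G : Matrix (Fin N) (Fin d) ℝ)
    (c : ℝ) (i : Fin N) :
    euclideanRows (W * Θ + c • G) i = ∑ l, W i l • euclideanRows Θ l + c • euclideanRows G i := by
  ext j
  simp [euclideanRows, Matrix.mul_apply]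

theorem toLp_rowAvg (Θ : Matrix (Fin N) (Fin d) ℝ) :
    WithLp.toLp 2 (rowAvg Θ) = avg (euclideanRows Θ) := by
  ext j
  simp [rowAvg, avg, euclideanRows, Finset.sum_apply]

theorem enorm_rowAvg (Θ : Matrix (Fin N) (Fin d) ℝ) :
    _root_.enorm (rowAvg Θ) = ‖avg (euclideanRows Θ)‖ := by
  rw [← toLp_rowAvg]
  rfl

theorem enorm_rowAvg_sub_rowAvg (Θ Θ' : Matrix (Fin N) (Fin d) ℝ) :
    _root_.enorm (fun j => rowAvg Θ j - rowAvg Θ' j) =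
      ‖avg (euclideanRows Θ) - avg (euclideanRows Θ')‖ := by
  rw [← toLp_rowAvg, ← toLp_rowAvg, ← WithLp.toLp_sub]
  rfl

theorem consErr_eq_sum_norm_sq (Θ : Matrix (Fin N) (Fin d) ℝ) :
    consErr Θ = ∑ i, ‖euclideanRows Θ i - avg (euclideanRows Θ)‖ ^ 2 := by
  simp only [consErr, ← toLp_rowAvg, euclideanRows, ← WithLp.toLp_sub]
  rfl

end EuclideanRows

theorem average_drift_window_general (N d : ℕ) (hN : 1 ≤ N)
    (B : ℝ) (hB : 0 < B)
    (W : Matrix (Fin N) (Fin N) ℝ) (hW : DoublyStochastic W)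
    (ε : ℕ → ℝ) (hεnonneg : ∀ t, 0 ≤ ε t) (hεmono : ∀ s t, s ≤ t → ε t ≤ ε s)
    (Θ G : ℕ → Matrix (Fin N) (Fin d) ℝ)
    (hupdate : ∀ t, Θ (t + 1) = W * Θ t + ε t • G t)
    (hG : ∀ t i, _root_.enorm (fun j => G t i j) ≤ B * (_root_.enorm (fun j => Θ t i j) + 1))
    (τ k : ℕ) (hk : τ ≤ k)
    (hstep : 6 * N * B * τ * ε (k - τ) ≤ 1) :
    _root_.enorm (fun j => rowAvg (Θ k) j - rowAvg (Θ (k - τ)) j)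
        ≤ 3 * ε (k - τ) * B * τ *
            (_root_.enorm (rowAvg (Θ k)) + Real.sqrt (consErr (Θ (k - τ))) + 1)
      ∧ _root_.enorm (fun j => rowAvg (Θ k) j - rowAvg (Θ (k - τ)) j)
        ≤ (1 / (2 * N)) *
            (_root_.enorm (rowAvg (Θ k)) + Real.sqrt (consErr (Θ (k - τ))) + 1) := by
  obtain ⟨hW₀, -, hW⟩ := hW
  have hN' : (1 : ℝ) ≤ N := by exact_mod_cast hN
  have hrate : 0 ≤ ε (k - τ) * B * τ := by have := hεnonneg (k - τ); positivity
  have hsmall : ε (k - τ) * B * τ ≤ 1 / 6 := by nlinarith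
  have hdrift := Consensus.norm_avg_add_sub_avg_le_three_mul (x := fun t => euclideanRows (Θ t))
    (g := fun t => euclideanRows (G t)) hW₀ hW
    (fun t i => by simp only [hupdate, euclideanRows_mul_add_smul]) hεnonneg hεmono hB.le
    hG hsmall
  rw [Nat.sub_add_cancel hk] at hdrift
  simp only [enorm_rowAvg_sub_rowAvg, enorm_rowAvg, consErr_eq_sum_norm_sq]
  refine ⟨hdrift, hdrift.trans ?_⟩
  gcongr
  rw [le_div_iff₀ (by positivity)]
  linarith

/-- Drift of the average iterate over a window of `τ` steps:
`‖θ̄^k − θ̄^{k−τ}‖ ≤ 3 ε_{k−τ} B τ (‖θ̄^k‖ + √(S^{k−τ}) + 1)` and consequently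
`‖θ̄^k − θ̄^{k−τ}‖ ≤ (1/(2N)) (‖θ̄^k‖ + √(S^{k−τ}) + 1)`. -/
theorem average_drift_window (N d : ℕ) (hN : 1 ≤ N) (hd : 1 ≤ d)
    (B : ℝ) (hB : 0 < B)
    (W : Matrix (Fin N) (Fin N) ℝ) (hW : DoublyStochastic W)
    (hWspec : specNorm (W - (N : ℝ)⁻¹ •
      Matrix.of (fun (_ : Fin N) (_ : Fin N) => (1 : ℝ))) ≤ 1)
    (ε : ℕ → ℝ) (hεnonneg : ∀ t, 0 ≤ ε t) (hεmono : ∀ s t, s ≤ t → ε t ≤ ε s)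
    (Θ G : ℕ → Matrix (Fin N) (Fin d) ℝ)
    (hupdate : ∀ t, Θ (t + 1) = W * Θ t + ε t • G t)
    (hG : ∀ t i, _root_.enorm (fun j => G t i j) ≤ B * (_root_.enorm (fun j => Θ t i j) + 1))
    (τ k : ℕ) (hτ : 1 ≤ τ) (hk : τ ≤ k)
    (hstep : 6 * N * B * τ * ε (k - τ) ≤ 1) :
    _root_.enorm (fun j => rowAvg (Θ k) j - rowAvg (Θ (k - τ)) j)
        ≤ 3 * ε (k - τ) * B * τ *
            (_root_.enorm (rowAvg (Θ k)) + Real.sqrt (consErr (Θ (k - τ))) + 1)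
      ∧ _root_.enorm (fun j => rowAvg (Θ k) j - rowAvg (Θ (k - τ)) j)
        ≤ (1 / (2 * N)) *
            (_root_.enorm (rowAvg (Θ k)) + Real.sqrt (consErr (Θ (k - τ))) + 1) :=
  average_drift_window_general N d hN B hB W hW ε hεnonneg hεmono Θ G hupdate hG τ k hk hstep
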